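/- Under M ⊥ R | X, Y, G=1, the normalized odds ratio õR(x,y) = OR(x,y)/E[OR(X,Y) | R=1, X=x, G=1] satisfies the integral equation E[õR(X,Y) | R=1, X=x, M=m, G=1] = p(M=m | X=x, R=0, G=1) / p(M=m | X=x, R=1, G=1) for all x, m. -/

import Mathlib

open Finset Set Real

noncomputable def Pr {Ω : Type*} [Fintype Ω] (μ : Ω → ℝ) (A : Set Ω) : ℝ :=
  ∑ ω, A.indicator μ ω

noncomputable def cPr {Ω : Type*} [Fintype Ω] (μ : Ω → ℝ) (A B : Set Ω) : ℝ :=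
  Pr μ (A ∩ B) / Pr μ B

noncomputable def cE {Ω : Type*} [Fintype Ω] (μ : Ω → ℝ) (f : Ω → ℝ) (B : Set Ω) : ℝ :=
  (∑ ω, B.indicator (fun ω' => μ ω' * f ω') ω) / Pr μ B

noncomputable def OddsR {Ω 𝓧 : Type*} [Fintype Ω] (μ : Ω → ℝ) (X : Ω → 𝓧) (Y : Ω → ℝ)
    (R G : Ω → ℕ) (x : 𝓧) (y : ℝ) : ℝ :=
  (cPr μ {ω | R ω = 0} {ω | X ω = x ∧ Y ω = y ∧ G ω = 1} *
      cPr μ {ω | R ω = 1} {ω | X ω = x ∧ Y ω = 0 ∧ G ω = 1}) /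
  (cPr μ {ω | R ω = 1} {ω | X ω = x ∧ Y ω = y ∧ G ω = 1} *
      cPr μ {ω | R ω = 0} {ω | X ω = x ∧ Y ω = 0 ∧ G ω = 1})

/-!
Write `S y` for the stratum `X = x, Y = y, G = 1`. Since `OR(x, y) = c(x) · p(R=0 | S y) / p(R=1 | S y)`
with the baseline odds `c(x) = p(R=1 | S 0) / p(R=0 | S 0)`, reweighting the units with `R = 1` by
`OR` turns their mass on each `S y` into `c(x)` times the mass of the units with `R = 0`. Because
`M ⊥ R | S y`, the same holds on `{M = m} ∩ S y`. Summing over `y`, the normaliser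
`E[OR | R=1, X=x, G=1]` is `c(x) · P(X=x, R=0, G=1) / P(X=x, R=1, G=1)` and
`E[OR | R=1, X=x, M=m, G=1]` is `c(x) · P(M=m, X=x, R=0, G=1) / P(M=m, X=x, R=1, G=1)`;
their quotient is the claimed ratio, `c(x)` cancelling.
-/

section

variable {Ω : Type*} [Fintype Ω] (μ : Ω → ℝ)

lemma Pr_mono (hμ : ∀ ω, 0 ≤ μ ω) {A B : Set Ω} (h : A ⊆ B) : Pr μ A ≤ Pr μ B :=
  sum_le_sum fun ω _ => indicator_le_indicator_of_subset h hμ ω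

lemma sum_indicator_mul_comp_eq_sum_image {β : Type*} [DecidableEq β] (Y : Ω → β) (A : Set Ω)
    (g : β → ℝ) :
    ∑ ω, A.indicator (fun ω => μ ω * g (Y ω)) ω =
      ∑ y ∈ univ.image Y, Pr μ (A ∩ {ω | Y ω = y}) * g y := by
  classical
  simp only [Pr, sum_mul]
  rw [sum_comm]
  refine sum_congr rfl fun ω _ => ?_
  rw [sum_eq_single_of_mem (Y ω) (mem_image_of_mem Y (mem_univ ω))]
  · simp [indicator_apply]
  · intro y _ hy
    simp [Ne.symm hy]

lemma Pr_eq_sum_image {β : Type*} [DecidableEq β] (Y : Ω → β) (A : Set Ω) :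
    Pr μ A = ∑ y ∈ univ.image Y, Pr μ (A ∩ {ω | Y ω = y}) := by
  simpa [Pr] using sum_indicator_mul_comp_eq_sum_image μ Y A (fun _ => 1)

lemma cE_congr {f g : Ω → ℝ} {B : Set Ω} (h : EqOn f g B) : cE μ f B = cE μ g B := by
  rw [cE, indicator_congr (g := fun ω => μ ω * g ω) fun ω hω => congrArg (μ ω * ·) (h hω), cE]

lemma cE_div_const (f : Ω → ℝ) (B : Set Ω) (c : ℝ) :
    cE μ (fun ω => f ω / c) B = cE μ f B / c := by
  rw [cE, cE, div_right_comm _ _ c, sum_div _ _ c]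
  congr 1
  refine sum_congr rfl fun ω _ => ?_
  by_cases hω : ω ∈ B <;> simp [hω, mul_div_assoc]

lemma Pr_inter_mul_Pr_comm_of_cPr_inter_eq_mul {A B₀ B₁ S : Set Ω} (hS : Pr μ S ≠ 0)
    (h₀ : cPr μ (A ∩ B₀) S = cPr μ A S * cPr μ B₀ S)
    (h₁ : cPr μ (A ∩ B₁) S = cPr μ A S * cPr μ B₁ S) :
    Pr μ (A ∩ B₀ ∩ S) * Pr μ (B₁ ∩ S) = Pr μ (A ∩ B₁ ∩ S) * Pr μ (B₀ ∩ S) := by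
  simp only [cPr] at h₀ h₁
  field_simp at h₀ h₁
  refine mul_right_cancel₀ hS ?_
  linear_combination Pr μ (B₁ ∩ S) * h₀ - Pr μ (B₀ ∩ S) * h₁

section Odds

variable {𝓧 : Type*} (X : Ω → 𝓧) (Y : Ω → ℝ) (R G : Ω → ℕ)

noncomputable def baselineOdds (x : 𝓧) : ℝ :=
  cPr μ {ω | R ω = 1} {ω | X ω = x ∧ Y ω = 0 ∧ G ω = 1} /
    cPr μ {ω | R ω = 0} {ω | X ω = x ∧ Y ω = 0 ∧ G ω = 1}

lemma OddsR_eq_baselineOdds_mul {x : 𝓧} {y : ℝ}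
    (hS : Pr μ {ω | X ω = x ∧ Y ω = y ∧ G ω = 1} ≠ 0) :
    OddsR μ X Y R G x y = baselineOdds μ X Y R G x *
      (Pr μ ({ω | R ω = 0} ∩ {ω | X ω = x ∧ Y ω = y ∧ G ω = 1}) /
        Pr μ ({ω | R ω = 1} ∩ {ω | X ω = x ∧ Y ω = y ∧ G ω = 1})) := by
  rw [OddsR, baselineOdds, mul_comm (cPr μ {ω | R ω = 0} _), mul_comm (cPr μ {ω | R ω = 1} _),
    mul_div_mul_comm, cPr, cPr, div_div_div_cancel_right₀ hS, mul_comm]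

lemma sum_indicator_mul_OddsR {x : 𝓧} {A₀ A₁ : Set Ω} (hA₁ : ∀ ω ∈ A₁, X ω = x)
    (hS : ∀ y ∈ range Y, Pr μ {ω | X ω = x ∧ Y ω = y ∧ G ω = 1} ≠ 0)
    (hR : ∀ y ∈ range Y, Pr μ ({ω | R ω = 1} ∩ {ω | X ω = x ∧ Y ω = y ∧ G ω = 1}) ≠ 0)
    (hA : ∀ y ∈ range Y,
      Pr μ (A₀ ∩ {ω | Y ω = y}) * Pr μ ({ω | R ω = 1} ∩ {ω | X ω = x ∧ Y ω = y ∧ G ω = 1}) =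
        Pr μ (A₁ ∩ {ω | Y ω = y}) * Pr μ ({ω | R ω = 0} ∩ {ω | X ω = x ∧ Y ω = y ∧ G ω = 1})) :
    ∑ ω, A₁.indicator (fun ω => μ ω * OddsR μ X Y R G (X ω) (Y ω)) ω =
      baselineOdds μ X Y R G x * Pr μ A₀ := by
  rw [indicator_congr (g := fun ω => μ ω * OddsR μ X Y R G x (Y ω)) fun ω hω => by rw [hA₁ ω hω],
    sum_indicator_mul_comp_eq_sum_image, Pr_eq_sum_image μ Y A₀, mul_sum]
  refine sum_congr rfl fun y hy => ?_
  obtain ⟨ω, -, rfl⟩ := mem_image.1 hy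
  rw [OddsR_eq_baselineOdds_mul μ X Y R G (hS _ ⟨ω, rfl⟩)]
  field_simp [hR _ ⟨ω, rfl⟩]
  linear_combination -baselineOdds μ X Y R G x * hA _ ⟨ω, rfl⟩

lemma baselineOdds_ne_zero {x : 𝓧} (hS : Pr μ {ω | X ω = x ∧ Y ω = 0 ∧ G ω = 1} ≠ 0)
    (h₀ : Pr μ ({ω | R ω = 0} ∩ {ω | X ω = x ∧ Y ω = 0 ∧ G ω = 1}) ≠ 0)
    (h₁ : Pr μ ({ω | R ω = 1} ∩ {ω | X ω = x ∧ Y ω = 0 ∧ G ω = 1}) ≠ 0) :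
    baselineOdds μ X Y R G x ≠ 0 :=
  div_ne_zero (div_ne_zero h₁ hS) (div_ne_zero h₀ hS)

lemma cE_OddsR {x : 𝓧} (hS : ∀ y ∈ range Y, Pr μ {ω | X ω = x ∧ Y ω = y ∧ G ω = 1} ≠ 0)
    (hR : ∀ y ∈ range Y, Pr μ ({ω | R ω = 1} ∩ {ω | X ω = x ∧ Y ω = y ∧ G ω = 1}) ≠ 0) :
    cE μ (fun ω => OddsR μ X Y R G (X ω) (Y ω)) {ω | R ω = 1 ∧ X ω = x ∧ G ω = 1} =
      baselineOdds μ X Y R G x * Pr μ {ω | X ω = x ∧ R ω = 0 ∧ G ω = 1} /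
        Pr μ {ω | X ω = x ∧ R ω = 1 ∧ G ω = 1} := by
  have fiber : ∀ r y, {ω | X ω = x ∧ R ω = r ∧ G ω = 1} ∩ {ω | Y ω = y} =
      {ω | R ω = r} ∩ {ω | X ω = x ∧ Y ω = y ∧ G ω = 1} := fun r y => by
    ext; simp only [mem_inter_iff, mem_ofPred_eq]; tauto
  have reorder : {ω | R ω = 1 ∧ X ω = x ∧ G ω = 1} = {ω | X ω = x ∧ R ω = 1 ∧ G ω = 1} := by
    ext; simp only [mem_ofPred_eq]; tauto
  rw [cE, reorder, sum_indicator_mul_OddsR μ X Y R G (A₀ := {ω | X ω = x ∧ R ω = 0 ∧ G ω = 1})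
    (fun ω hω => hω.1) hS hR fun y _ => by rw [fiber, fiber, mul_comm]]

lemma sum_indicator_mul_OddsR_of_condIndep {𝓜 : Type*} {M : Ω → 𝓜} {x : 𝓧} {m : 𝓜}
    (hS : ∀ y ∈ range Y, Pr μ {ω | X ω = x ∧ Y ω = y ∧ G ω = 1} ≠ 0)
    (hR : ∀ y ∈ range Y, Pr μ ({ω | R ω = 1} ∩ {ω | X ω = x ∧ Y ω = y ∧ G ω = 1}) ≠ 0)
    (hCI : ∀ y ∈ range Y, ∀ r : ℕ,
      cPr μ {ω | M ω = m ∧ R ω = r} {ω | X ω = x ∧ Y ω = y ∧ G ω = 1} =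
        cPr μ {ω | M ω = m} {ω | X ω = x ∧ Y ω = y ∧ G ω = 1} *
        cPr μ {ω | R ω = r} {ω | X ω = x ∧ Y ω = y ∧ G ω = 1}) :
    ∑ ω, {ω | R ω = 1 ∧ X ω = x ∧ M ω = m ∧ G ω = 1}.indicator
        (fun ω => μ ω * OddsR μ X Y R G (X ω) (Y ω)) ω =
      baselineOdds μ X Y R G x * Pr μ ({ω | M ω = m} ∩ {ω | X ω = x ∧ R ω = 0 ∧ G ω = 1}) := by
  refine sum_indicator_mul_OddsR μ X Y R G (fun ω hω => hω.2.1) hS hR fun y hy => ?_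
  have fiber₀ : {ω | M ω = m} ∩ {ω | X ω = x ∧ R ω = 0 ∧ G ω = 1} ∩ {ω | Y ω = y} =
      {ω | M ω = m} ∩ {ω | R ω = 0} ∩ {ω | X ω = x ∧ Y ω = y ∧ G ω = 1} := by
    ext; simp only [mem_inter_iff, mem_ofPred_eq]; tauto
  have fiber₁ : {ω | R ω = 1 ∧ X ω = x ∧ M ω = m ∧ G ω = 1} ∩ {ω | Y ω = y} =
      {ω | M ω = m} ∩ {ω | R ω = 1} ∩ {ω | X ω = x ∧ Y ω = y ∧ G ω = 1} := by
    ext; simp only [mem_inter_iff, mem_ofPred_eq]; tauto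
  rw [fiber₀, fiber₁]
  exact Pr_inter_mul_Pr_comm_of_cPr_inter_eq_mul μ (hS y hy) (hCI y hy 0) (hCI y hy 1)

noncomputable def normalizedOddsR (ω : Ω) : ℝ :=
  OddsR μ X Y R G (X ω) (Y ω) /
    cE μ (fun ω' => OddsR μ X Y R G (X ω') (Y ω')) {ω' | R ω' = 1 ∧ X ω' = X ω ∧ G ω' = 1}

lemma cE_normalizedOddsR {𝓜 : Type*} {M : Ω → 𝓜} {x : 𝓧} {m : 𝓜} (h0Y : (0 : ℝ) ∈ range Y)
    (hS : ∀ y ∈ range Y, Pr μ {ω | X ω = x ∧ Y ω = y ∧ G ω = 1} ≠ 0)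
    (hR : ∀ y ∈ range Y, ∀ r : ℕ, (r = 0 ∨ r = 1) →
      Pr μ ({ω | R ω = r} ∩ {ω | X ω = x ∧ Y ω = y ∧ G ω = 1}) ≠ 0)
    (hCI : ∀ y ∈ range Y, ∀ r : ℕ,
      cPr μ {ω | M ω = m ∧ R ω = r} {ω | X ω = x ∧ Y ω = y ∧ G ω = 1} =
        cPr μ {ω | M ω = m} {ω | X ω = x ∧ Y ω = y ∧ G ω = 1} *
        cPr μ {ω | R ω = r} {ω | X ω = x ∧ Y ω = y ∧ G ω = 1}) :
    cE μ (normalizedOddsR μ X Y R G) {ω | R ω = 1 ∧ X ω = x ∧ M ω = m ∧ G ω = 1} =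
      cPr μ {ω | M ω = m} {ω | X ω = x ∧ R ω = 0 ∧ G ω = 1} /
        cPr μ {ω | M ω = m} {ω | X ω = x ∧ R ω = 1 ∧ G ω = 1} := by
  have hR₁ : ∀ y ∈ range Y, Pr μ ({ω | R ω = 1} ∩ {ω | X ω = x ∧ Y ω = y ∧ G ω = 1}) ≠ 0 :=
    fun y hy => hR y hy 1 (.inr rfl)
  have hc := baselineOdds_ne_zero μ X Y R G (hS 0 h0Y) (hR 0 h0Y 0 (.inl rfl)) (hR₁ 0 h0Y)
  have reorder : {ω | R ω = 1 ∧ X ω = x ∧ M ω = m ∧ G ω = 1} =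
      {ω | M ω = m} ∩ {ω | X ω = x ∧ R ω = 1 ∧ G ω = 1} := by
    ext; simp only [mem_inter_iff, mem_ofPred_eq]; tauto
  have on_stratum : EqOn (normalizedOddsR μ X Y R G)
      (fun ω => OddsR μ X Y R G (X ω) (Y ω) /
        cE μ (fun ω' => OddsR μ X Y R G (X ω') (Y ω')) {ω' | R ω' = 1 ∧ X ω' = x ∧ G ω' = 1})
      {ω | R ω = 1 ∧ X ω = x ∧ M ω = m ∧ G ω = 1} := fun ω hω => by
    simp only [normalizedOddsR, hω.2.1]
  rw [cE_congr μ on_stratum, cE_div_const, cE,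
    sum_indicator_mul_OddsR_of_condIndep μ X Y R G hS hR₁ hCI, cE_OddsR μ X Y R G hS hR₁,
    reorder, cPr, cPr]
  have cancel : ∀ c a b p q : ℝ, c ≠ 0 → c * a / b / (c * p / q) = a / p / (b / q) :=
    fun c a b p q hc => by rw [mul_div_assoc c p, div_right_comm, mul_div_mul_left _ _ hc]; ring
  exact cancel _ _ _ _ _ hc

end Odds

end

theorem stmt8_general
    {Ω 𝓧 𝓜 : Type*} [Fintype Ω]
    (μ : Ω → ℝ) (X : Ω → 𝓧) (M : Ω → 𝓜) (Y : Ω → ℝ) (R G : Ω → ℕ)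
    (hμ0 : ∀ ω, 0 ≤ μ ω)
    (h0Y : (0 : ℝ) ∈ Set.range Y)
    (hpos : ∀ x ∈ Set.range X, ∀ m ∈ Set.range M, ∀ y ∈ Set.range Y, ∀ r : ℕ,
      (r = 0 ∨ r = 1) →
      0 < Pr μ {ω | X ω = x ∧ M ω = m ∧ Y ω = y ∧ R ω = r ∧ G ω = 1})
    (hCI : ∀ (m : 𝓜) (r : ℕ) (x : 𝓧) (y : ℝ),
      0 < Pr μ {ω | X ω = x ∧ Y ω = y ∧ G ω = 1} →
      cPr μ {ω | M ω = m ∧ R ω = r} {ω | X ω = x ∧ Y ω = y ∧ G ω = 1} =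
        cPr μ {ω | M ω = m} {ω | X ω = x ∧ Y ω = y ∧ G ω = 1} *
        cPr μ {ω | R ω = r} {ω | X ω = x ∧ Y ω = y ∧ G ω = 1})
 :
    ∀ x ∈ Set.range X, ∀ m ∈ Set.range M,
      cE μ (fun ω =>
          OddsR μ X Y R G (X ω) (Y ω) /
            cE μ (fun ω' => OddsR μ X Y R G (X ω') (Y ω'))
              {ω' | R ω' = 1 ∧ X ω' = X ω ∧ G ω' = 1})
        {ω | R ω = 1 ∧ X ω = x ∧ M ω = m ∧ G ω = 1} =
      cPr μ {ω | M ω = m} {ω | X ω = x ∧ R ω = 0 ∧ G ω = 1} /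
        cPr μ {ω | M ω = m} {ω | X ω = x ∧ R ω = 1 ∧ G ω = 1} := by
  intro x hx m hm
  have pos : ∀ y ∈ range Y, ∀ r, (r = 0 ∨ r = 1) → ∀ A : Set Ω,
      {ω | X ω = x ∧ M ω = m ∧ Y ω = y ∧ R ω = r ∧ G ω = 1} ⊆ A → 0 < Pr μ A :=
    fun y hy r hr A hA => (hpos x hx m hm y hy r hr).trans_le (Pr_mono μ hμ0 hA)
  have hS : ∀ y ∈ range Y, 0 < Pr μ {ω | X ω = x ∧ Y ω = y ∧ G ω = 1} := fun y hy =>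
    pos y hy 1 (.inr rfl) _ fun _ h => ⟨h.1, h.2.2.1, h.2.2.2.2⟩
  exact cE_normalizedOddsR μ X Y R G h0Y (fun y hy => (hS y hy).ne')
    (fun y hy r hr => ne_of_gt (pos y hy r hr _ fun _ h => ⟨h.2.2.2.1, h.1, h.2.2.1, h.2.2.2.2⟩))
    fun y hy r => hCI m r x y (hS y hy)

theorem stmt8
    {Ω 𝓧 𝓜 : Type*} [Fintype Ω]
    (μ : Ω → ℝ) (X : Ω → 𝓧) (M : Ω → 𝓜) (Y : Ω → ℝ) (R G : Ω → ℕ)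
    (hμ0 : ∀ ω, 0 ≤ μ ω) (hμ1 : ∑ ω, μ ω = 1)
    (hR : ∀ ω, R ω = 0 ∨ R ω = 1)
    (h0Y : (0 : ℝ) ∈ Set.range Y)
    (hpos : ∀ x ∈ Set.range X, ∀ m ∈ Set.range M, ∀ y ∈ Set.range Y, ∀ r : ℕ,
      (r = 0 ∨ r = 1) →
      0 < Pr μ {ω | X ω = x ∧ M ω = m ∧ Y ω = y ∧ R ω = r ∧ G ω = 1})
    (hCI : ∀ (m : 𝓜) (r : ℕ) (x : 𝓧) (y : ℝ),
      0 < Pr μ {ω | X ω = x ∧ Y ω = y ∧ G ω = 1} →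
      cPr μ {ω | M ω = m ∧ R ω = r} {ω | X ω = x ∧ Y ω = y ∧ G ω = 1} =
        cPr μ {ω | M ω = m} {ω | X ω = x ∧ Y ω = y ∧ G ω = 1} *
        cPr μ {ω | R ω = r} {ω | X ω = x ∧ Y ω = y ∧ G ω = 1})
 :
    ∀ x ∈ Set.range X, ∀ m ∈ Set.range M,
      cE μ (fun ω =>
          OddsR μ X Y R G (X ω) (Y ω) /
            cE μ (fun ω' => OddsR μ X Y R G (X ω') (Y ω'))
              {ω' | R ω' = 1 ∧ X ω' = X ω ∧ G ω' = 1})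
        {ω | R ω = 1 ∧ X ω = x ∧ M ω = m ∧ G ω = 1} =
      cPr μ {ω | M ω = m} {ω | X ω = x ∧ R ω = 0 ∧ G ω = 1} /
        cPr μ {ω | M ω = m} {ω | X ω = x ∧ R ω = 1 ∧ G ω = 1} :=
  stmt8_general μ X M Y R G hμ0 h0Y hpos hCI
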